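/- arXiv:2506.16860 — 2 statements merged into one kernel-verified Lean document; each statement's English description precedes it below -/
import Mathlib

section
/- Fix a prime p and ε > 0. If there exists a real x with liminf_{q→∞} q·|q|_p·‖qx‖ ≥ ε, then there exists a real y with inf_{q∈ℕ, q≥1} q·|q|_p·‖qy‖ ≥ ε. -/
open Filter

noncomputable def padicAbs (p q : ℕ) : ℝ := (p : ℝ) ^ (-(padicValNat p q : ℤ))

noncomputable def distNearestInt (x : ℝ) : ℝ := |x - round x|

noncomputable def plcQty (p : ℕ) (x : ℝ) (q : ℕ) : ℝ :=
  (q : ℝ) * padicAbs p q * distNearestInt ((q : ℝ) * x)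

/-!
Let `y` be a limit point of the fractional parts of `p ^ n * x`. Multiplying `q` by `p ^ n`
divides `|q|_p` by `p ^ n`, so `plcQty p x (q * p ^ n) = plcQty p (p ^ n * x) q`, and by
continuity and `1`-periodicity in the real variable these values accumulate at `plcQty p y q`.
Since `q * p ^ n → ∞`, the accumulation point is at least `liminf (plcQty p x) ≥ ε`.
-/

open Topology

lemma Filter.le_of_tendsto_comp_of_le_liminf {ι α : Type*} {f : Filter ι} [f.NeBot]
    {g : Filter α} {u : α → ℝ} {v : ι → α} {ε L : ℝ}
    (hu : g.IsBoundedUnder (· ≥ ·) u) (hε : ε ≤ liminf u g) (hv : Tendsto v f g)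
    (hL : Tendsto (u ∘ v) f (𝓝 L)) : ε ≤ L :=
  hε.trans <| (hv.liminf_le_liminf_comp hL.isBoundedUnder_le.isCoboundedUnder_ge hu).trans_eq
    hL.liminf_eq

lemma continuous_distNearestInt : Continuous distNearestInt := by
  have h : distNearestInt = fun x : ℝ ↦ ‖(x : UnitAddCircle)‖ :=
    funext fun _ ↦ UnitAddCircle.norm_eq.symm
  rw [h]
  exact continuous_norm.comp (AddCircle.continuous_mk' 1)

lemma distNearestInt_add_intCast (x : ℝ) (m : ℤ) : distNearestInt (x + m) = distNearestInt x := by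
  simp [distNearestInt, round_add_intCast]

lemma plcQty_nonneg (p : ℕ) (x : ℝ) (q : ℕ) : 0 ≤ plcQty p x q := by
  unfold plcQty padicAbs distNearestInt
  positivity

lemma continuous_plcQty (p q : ℕ) : Continuous fun x ↦ plcQty p x q :=
  continuous_const.mul (continuous_distNearestInt.comp (continuous_const.mul continuous_id))

lemma plcQty_fract (p : ℕ) (x : ℝ) (q : ℕ) : plcQty p (Int.fract x) q = plcQty p x q := by
  have h : (q : ℝ) * x = q * Int.fract x + ((q * ⌊x⌋ : ℤ) : ℝ) := by
    push_cast [Int.fract]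
    ring
  rw [plcQty, plcQty, h, distNearestInt_add_intCast]

lemma padicAbs_mul_pow {p : ℕ} (hp : p.Prime) {q : ℕ} (hq : q ≠ 0) (n : ℕ) :
    padicAbs p (q * p ^ n) * (p : ℝ) ^ n = padicAbs p q := by
  have : Fact p.Prime := ⟨hp⟩
  have hp0 : (p : ℝ) ≠ 0 := by exact_mod_cast hp.ne_zero
  rw [padicAbs, padicAbs, padicValNat.mul hq (pow_ne_zero n hp.ne_zero), padicValNat.prime_pow,
    ← zpow_natCast, ← zpow_add₀ hp0]
  push_cast
  ring_nf

lemma plcQty_mul_pow {p : ℕ} (hp : p.Prime) {q : ℕ} (hq : q ≠ 0) (x : ℝ) (n : ℕ) :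
    plcQty p x (q * p ^ n) = plcQty p ((p : ℝ) ^ n * x) q := by
  rw [plcQty, plcQty, ← padicAbs_mul_pow hp hq n]
  push_cast
  ring_nf

theorem le_plcQty_of_tendsto_fract {p : ℕ} (hp : p.Prime) {ε x y : ℝ} {φ : ℕ → ℕ}
    (hx : ε ≤ liminf (plcQty p x) atTop) (hφ : Tendsto φ atTop atTop)
    (hy : Tendsto (fun k ↦ Int.fract ((p : ℝ) ^ φ k * x)) atTop (𝓝 y))
    {q : ℕ} (hq : q ≠ 0) : ε ≤ plcQty p y q := by
  refine le_of_tendsto_comp_of_le_liminf (f := atTop) (v := fun k ↦ q * p ^ φ k)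
    (isBoundedUnder_of ⟨0, plcQty_nonneg p x⟩) hx ?_ ?_
  · refine tendsto_atTop_mono (fun k ↦ Nat.le_mul_of_pos_left _ (Nat.pos_of_ne_zero hq)) ?_
    exact (tendsto_pow_atTop_atTop_of_one_lt hp.one_lt).comp hφ
  · have h := ((continuous_plcQty p q).tendsto y).comp hy
    refine h.congr fun k ↦ ?_
    simp only [Function.comp_apply, plcQty_fract, plcQty_mul_pow hp hq]

theorem stmt_3_general (p : ℕ) (hp : p.Prime) (ε : ℝ)
    (h : ∃ x : ℝ, ε ≤ liminf (plcQty p x) atTop) :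
    ∃ y : ℝ, ∀ q : ℕ, 1 ≤ q → ε ≤ plcQty p y q := by
  obtain ⟨x, hx⟩ := h
  have hmem (n : ℕ) : Int.fract ((p : ℝ) ^ n * x) ∈ Set.Icc (0 : ℝ) 1 :=
    ⟨Int.fract_nonneg _, (Int.fract_lt_one _).le⟩
  obtain ⟨y, -, φ, hφ, hy⟩ := isCompact_Icc.tendsto_subseq hmem
  exact ⟨y, fun q hq ↦ le_plcQty_of_tendsto_fract hp hx hφ.tendsto_atTop hy (by omega)⟩

theorem stmt_3 (p : ℕ) (hp : p.Prime) (ε : ℝ) (hε : 0 < ε)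
    (h : ∃ x : ℝ, ε ≤ liminf (plcQty p x) atTop) :
    ∃ y : ℝ, ∀ q : ℕ, 1 ≤ q → ε ≤ plcQty p y q :=
  stmt_3_general p hp ε h
end

section
/- Let p be a prime, f : ℝ/ℤ → ℝ₊ a continuous function, and K ⊆ ℝ/ℤ a nonempty closed set invariant under multiplication by p. Then K contains an f-bottom point, i.e., a point y ∈ K such that f(p^n·y) ≥ f(y) for all n ≥ 1. -/
theorem stmt_6 (p : ℕ) (hp : p.Prime) (f : AddCircle (1 : ℝ) → ℝ)
    (hf : Continuous f) (hf0 : ∀ x, 0 ≤ f x)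
    (K : Set (AddCircle (1 : ℝ))) (hK : IsClosed K) (hKne : K.Nonempty)
    (hKinv : ∀ x ∈ K, p • x ∈ K) :
    ∃ y ∈ K, ∀ n : ℕ, 1 ≤ n → f y ≤ f (p ^ n • y) := by
  have hKc : IsCompact K := hK.isCompact
  obtain ⟨y, hyK, hmin⟩ := hKc.exists_isMinOn hKne hf.continuousOn
  have hpow : ∀ n : ℕ, (p ^ n) • y ∈ K := by
    intro n
    induction n with
    | zero => simpa using hyK
    | succ n ih =>
      have := hKinv _ ih
      rwa [smul_smul, ← pow_succ'] at this
  exact ⟨y, hyK, fun n _ => hmin (hpow n)⟩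
end
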